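/- arXiv:1702.06152 — 5 statements merged into one kernel-verified Lean document; each statement's English description precedes it below -/
import Mathlib

section
/- Let c > 0 and u > 0. For every a ∈ (0, u), (a/u)·log₂(1 + c/a) + ((u−a)/u)·log₂(1 + c/(u−a)) ≤ log₂(1 + 2c/u), with equality if and only if a = u/2. -/
/-!
The left-hand side is the Jensen combination of `log₂` at the points `1 + c/a` and `1 + c/(u-a)`
with weights `a/u` and `(u-a)/u`, whose barycenter is `1 + 2c/u`. Strict concavity of `log₂`
gives the inequality, with equality exactly when the two points coincide, i.e. when `a = u/2`.
-/

open Real Set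

theorem strictConcaveOn_logb_Ioi {b : ℝ} (hb : 1 < b) : StrictConcaveOn ℝ (Ioi 0) (logb b) := by
  refine ⟨convex_Ioi 0, fun x hx y hy hxy s t hs ht hst => ?_⟩
  have hlog := strictConcaveOn_log_Ioi.2 hx hy hxy hs ht hst
  simp only [smul_eq_mul, logb] at hlog ⊢
  rw [mul_div_assoc', mul_div_assoc', ← add_div]
  exact div_lt_div_of_pos_right hlog (log_pos hb)

theorem StrictConcaveOn.smul_add_smul_eq_map_iff {𝕜 E β : Type*} [Field 𝕜] [LinearOrder 𝕜]
    [IsStrictOrderedRing 𝕜] [AddCommGroup E] [AddCommGroup β] [PartialOrder β] [Module 𝕜 E]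
    [Module 𝕜 β] {s : Set E} {f : E → β} {x y : E} {a b : 𝕜}
    (hf : StrictConcaveOn 𝕜 s f) (hx : x ∈ s) (hy : y ∈ s) (ha : 0 < a) (hb : 0 < b)
    (hab : a + b = 1) : a • f x + b • f y = f (a • x + b • y) ↔ x = y := by
  refine ⟨fun heq => ?_, ?_⟩
  · by_contra hxy
    exact (hf.2 hx hy hxy ha hb hab).ne heq
  · rintro rfl
    rw [Convex.combo_self hab, Convex.combo_self hab]

theorem one_add_div_eq_one_add_div_sub_iff {c u a : ℝ} (hc : c ≠ 0) (ha : a ≠ 0)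
    (hua : u - a ≠ 0) : 1 + c / a = 1 + c / (u - a) ↔ a = u / 2 := by
  rw [add_right_inj, div_eq_div_iff ha hua, mul_right_inj' hc]
  constructor <;> intro h <;> linarith

theorem div_mul_one_add_div_add_sub_div_mul_one_add_div_sub {c u a : ℝ} (hu : u ≠ 0)
    (ha : a ≠ 0) (hua : u - a ≠ 0) :
    a / u * (1 + c / a) + (u - a) / u * (1 + c / (u - a)) = 1 + 2 * c / u := by
  field_simp
  ring

/-- One-step bisection inequality: for `c > 0`, `u > 0` and every `a ∈ (0, u)`,
`(a/u)·log₂(1 + c/a) + ((u−a)/u)·log₂(1 + c/(u−a)) ≤ log₂(1 + 2c/u)`,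
with equality if and only if `a = u/2`. -/
theorem one_step_bisection_optimal (c u : ℝ) (hc : 0 < c) (hu : 0 < u) :
    ∀ a ∈ Set.Ioo (0 : ℝ) u,
      (a / u) * Real.logb 2 (1 + c / a) +
        ((u - a) / u) * Real.logb 2 (1 + c / (u - a)) ≤ Real.logb 2 (1 + 2 * c / u) ∧
      ((a / u) * Real.logb 2 (1 + c / a) +
        ((u - a) / u) * Real.logb 2 (1 + c / (u - a)) = Real.logb 2 (1 + 2 * c / u)
        ↔ a = u / 2) := by
  rintro a ⟨ha, hau⟩
  have hua : 0 < u - a := sub_pos.2 hau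
  have hp : 1 + c / a ∈ Ioi (0 : ℝ) := mem_Ioi.2 (by positivity)
  have hq : 1 + c / (u - a) ∈ Ioi (0 : ℝ) := mem_Ioi.2 (by positivity)
  have hwa : 0 < a / u := by positivity
  have hwb : 0 < (u - a) / u := by positivity
  have hw : a / u + (u - a) / u = 1 := by rw [← add_div, add_sub_cancel, div_self hu.ne']
  have hlogb := strictConcaveOn_logb_Ioi one_lt_two
  have hjensen := hlogb.concaveOn.2 hp hq hwa.le hwb.le hw
  have hequality := hlogb.smul_add_smul_eq_map_iff hp hq hwa hwb hw
  simp only [smul_eq_mul,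
    div_mul_one_add_div_add_sub_div_mul_one_add_div_sub hu.ne' ha.ne' hua.ne'] at hjensen hequality
  exact ⟨hjensen, hequality.trans (one_add_div_eq_one_add_div_sub_iff hc.ne' ha.ne' hua.ne')⟩
end

section
/- Fix γ > 0. Define a sequence of functions W_k : (0, ∞) → ℝ recursively by W_0(u) = log₂(1 + γ/u) and W_{k+1}(u) = sup over a ∈ (0, u) of [ (a/u)·W_k(a) + ((u−a)/u)·W_k(u−a) ]. Then for every k ∈ ℕ and every u > 0, W_k(u) = log₂(1 + 2^k · γ / u). -/
/-!
Write `c = 2^k γ`. By concavity of `log`, splitting `(0, u)` at `a` gives the average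
`(a/u) log₂(1 + c/a) + ((u-a)/u) log₂(1 + c/(u-a)) ≤ log₂((a/u)(1 + c/a) + ((u-a)/u)(1 + c/(u-a)))
= log₂(1 + 2c/u)`, with equality at the bisection `a = u/2`. So the supremum in the recursion
is attained and the closed form propagates by induction on `k`.
-/

open Set Real

/-- The objective of one sensing slot: sub-beam `a` of the interval of width `u` is acknowledged
with probability `a/u`. -/
noncomputable def splitAverage (f : ℝ → ℝ) (u a : ℝ) : ℝ :=
  a / u * f a + (u - a) / u * f (u - a)

lemma concaveOn_logb {b : ℝ} (hb : 1 ≤ b) : ConcaveOn ℝ (Ioi 0) (logb b) := by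
  have h := strictConcaveOn_log_Ioi.concaveOn.smul (inv_nonneg.2 (log_nonneg hb))
  refine h.congr fun x _ => ?_
  simp only [smul_eq_mul, logb, inv_mul_eq_div]

section

variable {b c u : ℝ}

lemma splitAverage_logb_le (hb : 1 ≤ b) (hc : 0 ≤ c) {a : ℝ} (ha : 0 < a) (hau : a < u) :
    splitAverage (fun x => logb b (1 + c / x)) u a ≤ logb b (1 + 2 * c / u) := by
  have hu : 0 < u := ha.trans hau
  have hua : 0 < u - a := sub_pos.2 hau
  have hmix : a / u * (1 + c / a) + (u - a) / u * (1 + c / (u - a)) = 1 + 2 * c / u := by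
    field_simp
    ring
  have h := (concaveOn_logb hb).2 (by positivity : (0 : ℝ) < 1 + c / a)
    (by positivity : (0 : ℝ) < 1 + c / (u - a)) (by positivity : (0 : ℝ) ≤ a / u)
    (by positivity : (0 : ℝ) ≤ (u - a) / u) (by field_simp; ring)
  simpa only [splitAverage, smul_eq_mul, hmix] using h

lemma splitAverage_logb_half (hu : 0 < u) :
    splitAverage (fun x => logb b (1 + c / x)) u (u / 2) = logb b (1 + 2 * c / u) := by
  have hhalf : u - u / 2 = u / 2 := by ring
  have hdiv : c / (u / 2) = 2 * c / u := by field_simp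
  simp only [splitAverage, hhalf, hdiv]
  field_simp
  ring

lemma isGreatest_splitAverage_logb (hb : 1 ≤ b) (hc : 0 ≤ c) (hu : 0 < u) :
    IsGreatest (splitAverage (fun x => logb b (1 + c / x)) u '' Ioo 0 u)
      (logb b (1 + 2 * c / u)) := by
  refine ⟨⟨u / 2, ⟨by positivity, by linarith⟩, splitAverage_logb_half hu⟩, ?_⟩
  rintro _ ⟨a, ⟨ha, hau⟩, rfl⟩
  exact splitAverage_logb_le hb hc ha hau

end

/-- Scalar dynamic program of Theorem 1: with `W_0(u) = log₂(1 + γ/u)` and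
`W_{k+1}(u) = sup_{a ∈ (0,u)} [(a/u)·W_k(a) + ((u−a)/u)·W_k(u−a)]`, one has
`W_k(u) = log₂(1 + 2^k γ / u)` for all `k ∈ ℕ` and `u > 0`. -/
theorem value_function_closed_form (γ : ℝ) (hγ : 0 < γ) (W : ℕ → ℝ → ℝ)
    (h0 : ∀ u : ℝ, 0 < u → W 0 u = Real.logb 2 (1 + γ / u))
    (hrec : ∀ k : ℕ, ∀ u : ℝ, 0 < u →
      W (k + 1) u =
        sSup ((fun a : ℝ => (a / u) * W k a + ((u - a) / u) * W k (u - a)) ''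
          Set.Ioo 0 u)) :
    ∀ k : ℕ, ∀ u : ℝ, 0 < u → W k u = Real.logb 2 (1 + 2 ^ k * γ / u) := by
  intro k
  induction k with
  | zero => simpa using h0
  | succ k ih =>
    intro u hu
    have hWk : splitAverage (W k) u '' Ioo 0 u =
        splitAverage (fun x => logb 2 (1 + 2 ^ k * γ / x)) u '' Ioo 0 u :=
      image_congr fun a ha => by
        simp only [splitAverage, ih a ha.1, ih (u - a) (sub_pos.2 ha.2)]
    rw [hrec k u hu]
    change sSup (splitAverage (W k) u '' _) = _
    rw [hWk, (isGreatest_splitAverage_logb one_le_two (by positivity) hu).csSup_eq]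
    congr 2
    ring
end

section
/- Fix γ > 0, k ∈ ℕ, and u > 0, and suppose W_k(w) = log₂(1 + 2^k·γ/w) for all w > 0. Then the function a ↦ (a/u)·W_k(a) + ((u−a)/u)·W_k(u−a) on (0, u) attains its maximum at a = u/2 and at no other point; i.e., the unique optimal sensing beam bisects the uncertainty region. -/
/-!
The objective is `(g a + g (u - a)) / (u log 2)` with `g w = w log (1 + c / w)` and `c = 2^k γ`.
The map `g` is the perspective of the strictly concave `x ↦ log (1 + c x)`, hence strictly
concave on `(0, ∞)`, so `g a + g (u - a) < 2 g (u / 2)` unless `a = u - a`.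
-/

open Real Set

lemma strictConcaveOn_mul_log_one_add_div {c : ℝ} (hc : 0 < c) :
    StrictConcaveOn ℝ (Ioi 0) fun x => x * log (1 + c / x) := by
  refine ⟨convex_Ioi 0, fun x (hx : 0 < x) y (hy : 0 < y) hxy s t hs ht hst => ?_⟩
  have hm : 0 < s * x + t * y := by positivity
  have hlog := strictConcaveOn_log_Ioi.2 (x := 1 + c / x) (y := 1 + c / y)
    (show (0 : ℝ) < 1 + c / x by positivity) (show (0 : ℝ) < 1 + c / y by positivity)
    (fun h => hxy (by
      rw [add_right_inj, div_eq_div_iff hx.ne' hy.ne'] at h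
      exact (mul_left_cancel₀ hc.ne' h).symm))
    (div_pos (mul_pos hs hx) hm) (div_pos (mul_pos ht hy) hm) (by field_simp)
  -- the weights `s x / m`, `t y / m` (with `m = s x + t y`) recombine `1 + c / ·` at the mean
  have hmean : s * x / (s * x + t * y) * (1 + c / x) + t * y / (s * x + t * y) * (1 + c / y)
      = 1 + c / (s * x + t * y) := by
    field_simp
    linear_combination c * hst
  simp only [smul_eq_mul, hmean] at hlog ⊢
  calc s * (x * log (1 + c / x)) + t * (y * log (1 + c / y))
      = (s * x + t * y) * (s * x / (s * x + t * y) * log (1 + c / x)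
          + t * y / (s * x + t * y) * log (1 + c / y)) := by field_simp
    _ < (s * x + t * y) * log (1 + c / (s * x + t * y)) := by gcongr

/-- Optimality and uniqueness of the bisection policy: if
`W(w) = log₂(1 + 2^k γ / w)` for all `w > 0`, then
`a ↦ (a/u)·W(a) + ((u−a)/u)·W(u−a)` on `(0, u)` attains its maximum at `a = u/2`
and at no other point. -/
theorem bisection_unique_maximizer (γ : ℝ) (hγ : 0 < γ) (k : ℕ) (u : ℝ) (hu : 0 < u)
    (W : ℝ → ℝ) (hW : ∀ w : ℝ, 0 < w → W w = Real.logb 2 (1 + 2 ^ k * γ / w)) :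
    (∀ a ∈ Set.Ioo (0 : ℝ) u,
      (a / u) * W a + ((u - a) / u) * W (u - a) ≤
        ((u / 2) / u) * W (u / 2) + ((u - u / 2) / u) * W (u - u / 2)) ∧
    ∀ a ∈ Set.Ioo (0 : ℝ) u,
      (a / u) * W a + ((u - a) / u) * W (u - a) =
        ((u / 2) / u) * W (u / 2) + ((u - u / 2) / u) * W (u - u / 2) → a = u / 2 := by
  set g : ℝ → ℝ := fun x => x * log (1 + 2 ^ k * γ / x)
  have hg : StrictConcaveOn ℝ (Ioi 0) g := strictConcaveOn_mul_log_one_add_div (by positivity)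
  have hobj : ∀ a ∈ Ioo 0 u,
      a / u * W a + (u - a) / u * W (u - a) = (g a + g (u - a)) / (u * log 2) := by
    rintro a ⟨ha, hau⟩
    rw [hW a ha, hW (u - a) (sub_pos.2 hau)]
    simp only [g, logb]
    field_simp
  have hlt : ∀ a ∈ Ioo 0 u, a ≠ u / 2 →
      a / u * W a + (u - a) / u * W (u - a) <
        u / 2 / u * W (u / 2) + (u - u / 2) / u * W (u - u / 2) := by
    intro a ha hne
    have hmid := hg.2 ha.1 (sub_pos.2 ha.2) (fun h => hne (by linarith)) one_half_pos
      one_half_pos (add_halves 1)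
    rw [hobj a ha, hobj (u / 2) ⟨half_pos hu, half_lt_self hu⟩, sub_half]
    simp only [smul_eq_mul] at hmid
    rw [show 1 / 2 * a + 1 / 2 * (u - a) = u / 2 by ring] at hmid
    exact div_lt_div_of_pos_right (by linarith) (mul_pos hu (log_pos one_lt_two))
  refine ⟨fun a ha => ?_, fun a ha heq => by_contra fun hne => (hlt a ha hne).ne heq⟩
  rcases eq_or_ne a (u / 2) with rfl | hne
  · exact le_rfl
  · exact (hlt a ha hne).le
end

section
/- Let N > 0 and ζ > 0 be real constants. The function V(L) = ((N − L)/N) · log₂(1 + 2^L · N · ζ / (N − L)), defined for L ∈ [0, N), is strictly log-concave on [0, N); i.e., L ↦ ln V(L) is strictly concave on [0, N). -/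
/-!
With the log-SNR `t = g(L) = L log 2 + log (N ζ) - log (N - L)`, which is strictly convex in `L`,
one has `ln V(L) = χ(g(L)) + L log 2 + log (ζ / log 2)`, where
`χ(t) = log (softplus t) - t` and `softplus t = log (1 + eᵗ)`. The function `χ` is concave and
strictly decreasing (both reduce to `x / (1 + x) < log (1 + x) < x` for `x = eᵗ`), and a concave strictly decreasing
function of a strictly convex one is strictly concave.
-/

open Real Set

lemma log_one_add_lt_self {x : ℝ} (hx : 0 < x) : log (1 + x) < x := by
  rw [log_lt_iff_lt_exp (by linarith), add_comm]
  exact add_one_lt_exp hx.ne'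

lemma div_one_add_lt_log_one_add {x : ℝ} (hx : 0 < x) : x / (1 + x) < log (1 + x) := by
  have h := log_lt_sub_one_of_pos (inv_pos.2 (by linarith : 0 < 1 + x))
    (inv_ne_one.2 (by linarith))
  rw [log_inv] at h
  have : x / (1 + x) = 1 - (1 + x)⁻¹ := by field_simp; ring
  linarith

lemma ConcaveOn.comp_strictConvexOn_of_strictAnti {𝕜 E β γ : Type*} [Semiring 𝕜]
    [PartialOrder 𝕜] [AddCommMonoid E] [SMul 𝕜 E] [AddCommMonoid β] [PartialOrder β] [SMul 𝕜 β]
    [AddCommMonoid γ] [PartialOrder γ] [SMul 𝕜 γ] {s : Set E} {f : E → β} {h : β → γ} (hh : ConcaveOn 𝕜 univ h) (hh' : StrictAnti h)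
    (hf : StrictConvexOn 𝕜 s f) : StrictConcaveOn 𝕜 s (h ∘ f) := by
  refine ⟨hf.1, fun x hx y hy hxy a b ha hb hab => ?_⟩
  calc a • h (f x) + b • h (f y) ≤ h (a • f x + b • f y) :=
        hh.2 (mem_univ _) (mem_univ _) ha.le hb.le hab
    _ < h (f (a • x + b • y)) := hh' (hf.2 hx hy hxy ha hb hab)

lemma strictConvexOn_neg_log_const_sub (c : ℝ) :
    StrictConvexOn ℝ (Iio c) fun x => -log (c - x) := by
  refine ((strictConcaveOn_log_Iio.translate_left (-c)).neg.subset
    (fun x (hx : x < c) => show -c + x < 0 by linarith) (convex_Iio c)).congr fun x _ => ?_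
  simp only [Function.comp_apply, Pi.neg_apply, ← log_neg_eq_log (c - x), neg_sub]
  ring_nf

noncomputable def softplus (t : ℝ) : ℝ := log (1 + exp t)

lemma one_add_exp_pos (t : ℝ) : 0 < 1 + exp t := by positivity

lemma softplus_pos (t : ℝ) : 0 < softplus t := log_pos (lt_add_of_pos_right 1 (exp_pos t))

lemma continuous_softplus : Continuous softplus :=
  (continuous_const.add continuous_exp).log fun t => (one_add_exp_pos t).ne'

lemma hasDerivAt_softplus (t : ℝ) : HasDerivAt softplus (exp t / (1 + exp t)) t :=
  ((hasDerivAt_exp t).const_add 1).log (one_add_exp_pos t).ne'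

lemma hasDerivAt_log_softplus_sub (t : ℝ) :
    HasDerivAt (fun t => log (softplus t) - t) (exp t / ((1 + exp t) * softplus t) - 1) t := by
  refine (((hasDerivAt_softplus t).log (softplus_pos t).ne').sub (hasDerivAt_id t)).congr_deriv ?_
  rw [div_div]

lemma hasDerivAt_exp_div_mul_softplus (t : ℝ) :
    HasDerivAt (fun t => exp t / ((1 + exp t) * softplus t) - 1)
      (exp t * (softplus t - exp t) / ((1 + exp t) * softplus t) ^ 2) t := by
  refine ((hasDerivAt_exp t).div (((hasDerivAt_exp t).const_add 1).mul (hasDerivAt_softplus t))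
    (mul_pos (one_add_exp_pos t) (softplus_pos t)).ne').sub_const 1 |>.congr_deriv ?_
  have := (one_add_exp_pos t).ne'
  simp only [Pi.mul_apply]
  field_simp
  ring

lemma strictAnti_log_softplus_sub : StrictAnti fun t => log (softplus t) - t :=
  strictAnti_of_deriv_neg fun t => by
    rw [(hasDerivAt_log_softplus_sub t).deriv, sub_neg,
      div_lt_one (mul_pos (one_add_exp_pos t) (softplus_pos t)),
      ← div_lt_iff₀' (one_add_exp_pos t)]
    exact div_one_add_lt_log_one_add (exp_pos t)

lemma strictConcaveOn_log_softplus_sub :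
    StrictConcaveOn ℝ univ fun t => log (softplus t) - t := by
  refine strictConcaveOn_univ_of_deriv2_neg
    ((continuous_softplus.log fun t => (softplus_pos t).ne').sub continuous_id) fun t => ?_
  rw [Function.iterate_succ_apply, Function.iterate_one,
    funext fun t => (hasDerivAt_log_softplus_sub t).deriv,
    (hasDerivAt_exp_div_mul_softplus t).deriv]
  have : softplus t < exp t := log_one_add_lt_self (exp_pos t)
  have := mul_pos (one_add_exp_pos t) (softplus_pos t)
  exact div_neg_of_neg_of_pos (mul_neg_of_pos_of_neg (exp_pos t) (by linarith)) (by positivity)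

lemma log_throughput_eq {N ζ L : ℝ} (hN : 0 < N) (hζ : 0 < ζ) (hL : L < N) :
    log ((N - L) / N * logb 2 (1 + 2 ^ L * N * ζ / (N - L))) =
      log (softplus (log 2 * L + log (N * ζ) - log (N - L)))
        - (log 2 * L + log (N * ζ) - log (N - L)) + (log 2 * L + log (ζ / log 2)) := by
  have hNL : 0 < N - L := sub_pos.2 hL
  have hsnr : exp (log 2 * L + log (N * ζ) - log (N - L)) = 2 ^ L * N * ζ / (N - L) := by
    rw [exp_sub, exp_add, exp_log (by positivity), exp_log hNL, ← rpow_def_of_pos two_pos]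
    ring
  have hlog1 : 0 < log (1 + 2 ^ L * N * ζ / (N - L)) :=
    log_pos (lt_add_of_pos_right 1 (by positivity))
  have hlog2 : 0 < log 2 := log_pos one_lt_two
  rw [softplus, hsnr, logb, log_mul (by positivity) (by positivity), log_div hNL.ne' hN.ne',
    log_div hlog1.ne' hlog2.ne', log_mul hN.ne' hζ.ne', log_div hζ.ne' hlog2.ne']
  ring

/-- Lemma 2: for real constants `N > 0` and `ζ > 0`, the throughput
`V(L) = ((N − L)/N) · log₂(1 + 2^L · N · ζ / (N − L))` is strictly log-concave on
`[0, N)`, i.e. `L ↦ ln V(L)` is strictly concave there. -/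
theorem throughput_strictly_logConcave (N ζ : ℝ) (hN : 0 < N) (hζ : 0 < ζ) :
    StrictConcaveOn ℝ (Set.Ico (0 : ℝ) N)
      (fun L : ℝ =>
        Real.log (((N - L) / N) *
          Real.logb 2 (1 + (2 : ℝ) ^ L * N * ζ / (N - L)))) := by
  have hIco : Convex ℝ (Ico 0 N) := convex_Ico 0 N
  have hlog2 : 0 ≤ log 2 := (log_pos one_lt_two).le
  have hsnr : StrictConvexOn ℝ (Ico 0 N) fun L => log 2 * L + log (N * ζ) - log (N - L) := by
    refine (((strictConvexOn_neg_log_const_sub N).subset Ico_subset_Iio_self hIco).add_convexOn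
      (((convexOn_id hIco).smul hlog2).add_const (log (N * ζ)))).congr fun L _ => ?_
    simp only [Pi.add_apply, id, smul_eq_mul]
    ring
  have hlin : ConcaveOn ℝ (Ico 0 N) fun L => log 2 * L + log (ζ / log 2) :=
    ((concaveOn_id hIco).smul hlog2).add_const _
  exact ((strictConcaveOn_log_softplus_sub.concaveOn.comp_strictConvexOn_of_strictAnti
    strictAnti_log_softplus_sub hsnr).add_concaveOn hlin).congr
    fun L hL => (log_throughput_eq hN hζ hL.2).symm
end

section
/- Let N ≥ 2 and K be integers with 1 ≤ K ≤ N − 1, and let γ₀ > 0, σ > 0. Set L̂ = (K + 1)/2 and L = ⌊L̂⌋. Then the optimized bisection throughput strictly exceeds the average exhaustive-search throughput: ((N − L)/N) · log₂(1 + N·2^L·γ₀ / (σ·(N − L))) > (1/K) · Σ_{j=0}^{K−1} ((N − j − 1)/N) · log₂(1 + N·K·γ₀ / ((N − j − 1)·σ)). -/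
/-!
With `c = N K γ₀ / σ`, each exhaustive-search term is `rate c x / (N log 2)` with `x = N - j - 1`
slots left, where `rate c x = x log (1 + c / x)` is concave and increasing in `x` and increasing
in `c`. Jensen bounds the average by `rate c (N - L̂)`. Bisection with `L = ⌊L̂⌋` slots has at
least as many slots left and, since `2 ^ L ≥ 2 L ≥ K`, at least the SNR budget `c`; by parity of
`K` one of the two gains is strict (`L < L̂` for even `K`, `K < 2 ^ L` for odd `K`).
-/

open Real Set Finset

/-- `x log (1 + c / x)` for `x > 0` (see `rate_eq_mul_log_one_add_div`): the rate, in nats, of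
`x` slots sharing the SNR budget `c`. -/
noncomputable def rate (c x : ℝ) : ℝ := x * (log (x + c) - log x)

section rate

variable {c x : ℝ}

lemma rate_eq_mul_log_one_add_div (hx : x ≠ 0) (hxc : x + c ≠ 0) :
    rate c x = x * log (1 + c / x) := by
  rw [rate, ← log_div hxc hx, add_div, div_self hx]

lemma hasDerivAt_rate (hx : x ≠ 0) (hxc : x + c ≠ 0) :
    HasDerivAt (rate c) (log (x + c) - log x - c / (x + c)) x := by
  have hlog := (((hasDerivAt_id' x).add_const c).log hxc).sub (hasDerivAt_log hx)
  refine ((hasDerivAt_id' x).mul hlog).congr_deriv ?_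
  simp only [Pi.sub_apply]
  field_simp
  ring

lemma hasDerivAt_log_add_sub_log_sub_div (hx : x ≠ 0) (hxc : x + c ≠ 0) :
    HasDerivAt (fun y ↦ log (y + c) - log y - c / (y + c)) (-c ^ 2 / (x * (x + c) ^ 2)) x := by
  have hshift := (hasDerivAt_id' x).add_const c
  refine (((hshift.log hxc).sub (hasDerivAt_log hx)).sub
    ((hasDerivAt_const x c).div hshift hxc)).congr_deriv ?_
  field_simp
  ring

lemma div_lt_log_add_sub_log (hc : 0 < c) (hx : 0 < x) : c / (x + c) < log (x + c) - log x := by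
  have hxc : 0 < x + c := by linarith
  have hne : x / (x + c) ≠ 1 := by
    rw [ne_eq, div_eq_one_iff_eq hxc.ne']
    linarith
  have h := log_lt_sub_one_of_pos (div_pos hx hxc) hne
  rw [log_div hx.ne' hxc.ne', div_sub_one hxc.ne', sub_add_cancel_left, neg_div] at h
  linarith

lemma continuousOn_rate (hc : 0 ≤ c) : ContinuousOn (rate c) (Ioi 0) := fun x (hx : 0 < x) ↦
  (hasDerivAt_rate hx.ne' (add_pos_of_pos_of_nonneg hx hc).ne').continuousAt.continuousWithinAt

lemma concaveOn_rate (hc : 0 ≤ c) : ConcaveOn ℝ (Ioi 0) (rate c) := by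
  refine concaveOn_of_hasDerivWithinAt2_nonpos (convex_Ioi 0) (continuousOn_rate hc)
    (f' := fun x ↦ log (x + c) - log x - c / (x + c)) (f'' := fun x ↦ -c ^ 2 / (x * (x + c) ^ 2))
    (fun x hx ↦ ?_) (fun x hx ↦ ?_) (fun x hx ↦ ?_)
  all_goals rw [interior_Ioi, Set.mem_Ioi] at hx
  all_goals have hxc : 0 < x + c := add_pos_of_pos_of_nonneg hx hc
  · exact (hasDerivAt_rate hx.ne' hxc.ne').hasDerivWithinAt
  · exact (hasDerivAt_log_add_sub_log_sub_div hx.ne' hxc.ne').hasDerivWithinAt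
  · rw [neg_div]
    exact neg_nonpos.mpr (by positivity)

lemma strictMonoOn_rate (hc : 0 < c) : StrictMonoOn (rate c) (Ioi 0) := by
  refine strictMonoOn_of_deriv_pos (convex_Ioi 0) (continuousOn_rate hc.le) fun x hx ↦ ?_
  rw [interior_Ioi] at hx
  have hx := mem_Ioi.mp hx
  rw [(hasDerivAt_rate hx.ne' (by linarith : 0 < x + c).ne').deriv, sub_pos]
  exact div_lt_log_add_sub_log hc hx

lemma rate_lt_rate_of_lt_left (hx : 0 < x) {c' : ℝ} (hc : 0 ≤ c) (hcc' : c < c') :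
    rate c x < rate c' x :=
  mul_lt_mul_of_pos_left (by gcongr) hx

lemma rate_lt_rate {c' x' : ℝ} (hc : 0 < c) (hx : 0 < x) (hcc' : c ≤ c') (hxx' : x ≤ x')
    (hlt : c < c' ∨ x < x') : rate c x < rate c' x' := by
  have hx' : 0 < x' := hx.trans_le hxx'
  rcases hlt with hlt | hlt
  · calc rate c x ≤ rate c x' := (strictMonoOn_rate hc).monotoneOn hx hx' hxx'
      _ < rate c' x' := rate_lt_rate_of_lt_left hx' hc.le hlt
  · calc rate c x < rate c x' := strictMonoOn_rate hc hx hx' hlt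
      _ ≤ rate c' x' := mul_le_mul_of_nonneg_left (by gcongr) hx'.le

end rate

lemma div_mul_logb_one_add_div {c x : ℝ} (hx : 0 < x) (hc : 0 ≤ c) (n : ℝ) :
    x / n * logb 2 (1 + c / x) = rate c x / (n * log 2) := by
  rw [rate_eq_mul_log_one_add_div hx.ne' (by positivity), logb]
  ring

lemma sum_range_sub_sub_one (a : ℝ) (K : ℕ) :
    ∑ j ∈ range K, (a - j - 1) = K * (a - (K + 1) / 2) := by
  induction K with
  | zero => simp
  | succ K ih =>
    rw [sum_range_succ, ih]
    push_cast
    ring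

lemma ConcaveOn.average_range_le {s : Set ℝ} {f : ℝ → ℝ} (hf : ConcaveOn ℝ s f) {a : ℝ} {K : ℕ}
    (hK : K ≠ 0) (hs : ∀ j < K, a - j - 1 ∈ s) :
    1 / K * ∑ j ∈ range K, f (a - j - 1) ≤ f (a - (K + 1) / 2) := by
  have hK' : (K : ℝ) ≠ 0 := Nat.cast_ne_zero.mpr hK
  have h := hf.le_map_sum (t := range K) (w := fun _ ↦ 1 / (K : ℝ)) (p := fun j ↦ a - j - 1)
    (fun _ _ ↦ by positivity) (by simp [hK'])
    (fun j hj ↦ hs j (mem_range.mp hj))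
  simp only [smul_eq_mul, ← mul_sum, sum_range_sub_sub_one] at h
  rwa [← mul_assoc, one_div_mul_cancel hK', one_mul] at h

lemma two_mul_le_two_pow (n : ℕ) : 2 * n ≤ 2 ^ n := by
  cases n with
  | zero => simp
  | succ m => rw [pow_succ']; have := m.lt_two_pow_self; omega

lemma floor_natCast_add_one_div_two (K : ℕ) : ⌊((K : ℝ) + 1) / 2⌋ = ((K + 1) / 2 : ℕ) := by
  have h := Int.floor_div_natCast (((K + 1 : ℕ)) : ℝ) 2
  rw [Int.floor_natCast] at h
  push_cast at h
  rw [h]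
  omega

lemma lt_two_pow_or_two_mul_lt (K : ℕ) :
    K < 2 ^ ((K + 1) / 2) ∨ 2 * ((K + 1) / 2) < K + 1 := by
  have := two_mul_le_two_pow ((K + 1) / 2)
  omega

theorem bisection_beats_exhaustive_general (N K : ℕ) (hK : 1 ≤ K) (hKN : K ≤ N - 1)
    (γ₀ σ : ℝ) (hγ : 0 < γ₀) (hσ : 0 < σ) :
    (1 / (K : ℝ)) *
        ∑ j ∈ range K,
          (((N : ℝ) - j - 1) / N) *
            Real.logb 2 (1 + (N : ℝ) * K * γ₀ / (((N : ℝ) - j - 1) * σ)) <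
      (((N : ℝ) - (⌊((K : ℝ) + 1) / 2⌋ : ℤ)) / N) *
        Real.logb 2
          (1 + (N : ℝ) * (2 : ℝ) ^ (⌊((K : ℝ) + 1) / 2⌋ : ℤ) * γ₀ /
            (σ * ((N : ℝ) - (⌊((K : ℝ) + 1) / 2⌋ : ℤ)))) := by
  rw [floor_natCast_add_one_div_two, Int.cast_natCast, zpow_natCast]
  set L := (K + 1) / 2
  have hKN' : (K : ℝ) + 1 ≤ N := by exact_mod_cast (by omega : K + 1 ≤ N)
  have hslot : ∀ j < K, (0 : ℝ) < N - j - 1 := fun j hj ↦ by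
    have : (j : ℝ) + 1 ≤ K := by exact_mod_cast hj
    linarith
  have hL : 2 * (L : ℝ) ≤ K + 1 := by exact_mod_cast (by omega : 2 * L ≤ K + 1)
  have hKL : K ≤ 2 ^ L := by have := two_mul_le_two_pow L; omega
  have hK' : (1 : ℝ) ≤ K := by exact_mod_cast hK
  have hxL : (0 : ℝ) < N - L := by linarith
  have hN0 : (0 : ℝ) < N := by linarith
  set c := (N : ℝ) * K * γ₀ / σ
  have hc : 0 < c := by positivity
  calc _ = (1 / K * ∑ j ∈ range K, rate c (N - j - 1)) / (N * log 2) := by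
        rw [mul_sum, mul_sum, sum_div]
        refine sum_congr rfl fun j hj ↦ ?_
        rw [div_mul_eq_div_div_swap, div_mul_logb_one_add_div (hslot j (mem_range.mp hj)) hc.le,
          mul_div_assoc]
    _ ≤ rate c (N - (K + 1) / 2) / (N * log 2) := by
        gcongr
        exact (concaveOn_rate hc.le).average_range_le (by omega) hslot
    _ < rate (N * 2 ^ L * γ₀ / σ) (N - L) / (N * log 2) := by
        gcongr
        refine rate_lt_rate hc (by linarith) (by unfold c; gcongr; exact_mod_cast hKL)
          (by linarith) ?_
        obtain h | h : K < 2 ^ L ∨ 2 * L < K + 1 := lt_two_pow_or_two_mul_lt K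
        · left; unfold c; gcongr; exact_mod_cast h
        · have : 2 * (L : ℝ) < K + 1 := by exact_mod_cast h
          right; linarith
    _ = _ := by rw [div_mul_eq_div_div _ σ, div_mul_logb_one_add_div hxL (by positivity)]

open Finset in
/-- Lemma 3: bisection strictly outperforms exhaustive search. For integers
`1 ≤ K ≤ N − 1`, `γ₀ > 0`, `σ > 0`, with `L̂ = (K+1)/2` and `L = ⌊L̂⌋`,
`((N−L)/N) log₂(1 + N 2^L γ₀ / (σ(N−L)))
  > (1/K) Σ_{j=0}^{K−1} ((N−j−1)/N) log₂(1 + N K γ₀ / ((N−j−1)σ))`. -/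
theorem bisection_beats_exhaustive (N K : ℕ) (hN : 2 ≤ N) (hK : 1 ≤ K) (hKN : K ≤ N - 1)
    (γ₀ σ : ℝ) (hγ : 0 < γ₀) (hσ : 0 < σ) :
    (1 / (K : ℝ)) *
        ∑ j ∈ range K,
          (((N : ℝ) - j - 1) / N) *
            Real.logb 2 (1 + (N : ℝ) * K * γ₀ / (((N : ℝ) - j - 1) * σ)) <
      (((N : ℝ) - (⌊((K : ℝ) + 1) / 2⌋ : ℤ)) / N) *
        Real.logb 2
          (1 + (N : ℝ) * (2 : ℝ) ^ (⌊((K : ℝ) + 1) / 2⌋ : ℤ) * γ₀ /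
            (σ * ((N : ℝ) - (⌊((K : ℝ) + 1) / 2⌋ : ℤ)))) :=
  bisection_beats_exhaustive_general N K hK hKN γ₀ σ hγ hσ
end
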